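/- Let G be a cactus graph with n vertices and m edges, and let d be its degree sequence. Then m ≤ ⌊(3(n−1) − β)/2⌋, where β = max{μ_1, (μ_1+μ_odd)/2}. -/

import Mathlib

/-!
Deleting one edge from every cycle leaves a forest, so `m ≤ (n - 1) + c`, where `c` is the number
of cycles. In a cactus the cycles are edge-disjoint, have at least three edges each and contain no
bridge, so `b + 3c ≤ m` for the number `b` of bridges; together these give `2m ≤ 3(n - 1) - b`.
It remains to see `β ≤ b`. The non-bridge edges at a vertex pair up along the cycles through it,
so every vertex of odd degree lies on a bridge; a bridge has only two ends, and distinct leaves lie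
on distinct bridges because two adjacent leaves would make up a whole component, forcing `n = 2`.
-/

open Finset SimpleGraph

/-- The degree of a vertex `v`: the number of its neighbors in `G`. -/
noncomputable def gdeg {V : Type*} (G : SimpleGraph V) (v : V) : ℕ :=
  (G.neighborSet v).ncard

/-- The set of edge sets of cycles of `G`.  A cycle (as a subgraph) is identified
with its set of edges, which is invariant under rotation and reversal of the
corresponding closed walks. -/
def cycleEdgeSets {V : Type*} (G : SimpleGraph V) : Set (Set (Sym2 V)) :=
  {s | ∃ (u : V) (w : G.Walk u u), w.IsCycle ∧ s = {e | e ∈ w.edges}}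

/-- The number of cycles of `G`. -/
noncomputable def numCycles {V : Type*} (G : SimpleGraph V) : ℕ :=
  (cycleEdgeSets G).ncard

/-- A cactus graph: a connected graph in which every edge belongs to at most one
cycle, i.e. any two cycles sharing an edge coincide. -/
def IsCactus {V : Type*} (G : SimpleGraph V) : Prop :=
  G.Connected ∧
    ∀ s₁ ∈ cycleEdgeSets G, ∀ s₂ ∈ cycleEdgeSets G, (s₁ ∩ s₂).Nonempty → s₁ = s₂

/-- A unicyclic graph: a connected graph containing exactly one cycle. -/
def IsUnicyclic {V : Type*} (G : SimpleGraph V) : Prop :=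
  G.Connected ∧ ∃! s, s ∈ cycleEdgeSets G

/-- A graph is bridge-less if it has no bridge. -/
def BridgeLess {V : Type*} (G : SimpleGraph V) : Prop :=
  ∀ e, ¬ G.IsBridge e

/-- The number of bridges of `G`. -/
noncomputable def bridgeCount {V : Type*} (G : SimpleGraph V) : ℕ :=
  {e : Sym2 V | G.IsBridge e}.ncard

/-- A triangulated cactus: a cactus in which every cycle has length three and
every edge belongs to a cycle. -/
def IsTriangulatedCactus {V : Type*} (G : SimpleGraph V) : Prop :=
  IsCactus G ∧ (∀ (u : V) (w : G.Walk u u), w.IsCycle → w.length = 3) ∧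
    ∀ e ∈ G.edgeSet, ∃ (u : V) (w : G.Walk u u), w.IsCycle ∧ e ∈ w.edges

/-- The connected component of `x` in `G` contains a cycle. -/
def HasCycleFrom {V : Type*} (G : SimpleGraph V) (x : V) : Prop :=
  ∃ (u : V) (w : G.Walk u u), w.IsCycle ∧ G.Reachable x u

/-- A core cactus: a cactus graph with no bridge whose removal splits the graph
into two components each containing a cycle. -/
def IsCoreCactus {V : Type*} (G : SimpleGraph V) : Prop :=
  IsCactus G ∧ ∀ u v : V, G.IsBridge s(u, v) →
    ¬ (HasCycleFrom (G.deleteEdges {s(u, v)}) u ∧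
       HasCycleFrom (G.deleteEdges {s(u, v)}) v)

/-- `d 1, …, d n` is a degree sequence: non-increasing, with positive entries
bounded by `n - 1`, and with even sum. -/
def IsDegSeq (n : ℕ) (d : ℕ → ℕ) : Prop :=
  (∀ i j, 1 ≤ i → i ≤ j → j ≤ n → d j ≤ d i) ∧
  (∀ i, 1 ≤ i → i ≤ n → 1 ≤ d i ∧ d i ≤ n - 1) ∧
  Even (∑ i ∈ Finset.Icc 1 n, d i)

/-- A graph `G` on vertex set `{1, …, n}` realizes the sequence `d 1, …, d n`
if the degree of vertex `i` is `d i` for every `i`. -/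
def Realizes {n : ℕ} (G : SimpleGraph (Fin n)) (d : ℕ → ℕ) : Prop :=
  ∀ i : Fin n, gdeg G i = d (i.1 + 1)

/-- `μ₁`: the number of entries of the sequence equal to `1`. -/
def mu1 (n : ℕ) (d : ℕ → ℕ) : ℕ :=
  ((Finset.Icc 1 n).filter fun i => d i = 1).card

/-- `μ_odd`: the number of odd entries of the sequence that are greater than `1`. -/
def muOdd (n : ℕ) (d : ℕ → ℕ) : ℕ :=
  ((Finset.Icc 1 n).filter fun i => Odd (d i) ∧ 1 < d i).card

/-- The bridge parameter `β = max {μ₁, (μ₁ + μ_odd)/2}` of a sequence. -/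
def seqBeta (n : ℕ) (d : ℕ → ℕ) : ℕ :=
  max (mu1 n d) ((mu1 n d + muOdd n d) / 2)

/-- `μ₁` of a graph: the number of vertices of degree `1`. -/
noncomputable def gmu1 {V : Type*} (G : SimpleGraph V) : ℕ :=
  {v : V | gdeg G v = 1}.ncard

/-- `μ_odd` of a graph: the number of vertices of odd degree greater than `1`. -/
noncomputable def gmuOdd {V : Type*} (G : SimpleGraph V) : ℕ :=
  {v : V | Odd (gdeg G v) ∧ 1 < gdeg G v}.ncard

/-- The bridge parameter `β = max {μ₁, (μ₁ + μ_odd)/2}` of a graph. -/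
noncomputable def graphBeta {V : Type*} (G : SimpleGraph V) : ℕ :=
  max (gmu1 G) ((gmu1 G + gmuOdd G) / 2)

namespace Set.Finite

variable {ι α : Type*} {t : Set ι} {s : ι → Set α}

lemma ncard_biUnion_le_mul (ht : t.Finite) {n : ℕ} (h : ∀ i ∈ t, (s i).ncard ≤ n) :
    (⋃ i ∈ t, s i).ncard ≤ n * t.ncard := by
  calc (⋃ i ∈ t, s i).ncard ≤ ∑ i ∈ ht.toFinset, (s i).ncard := by
        simpa using ht.toFinset.set_ncard_biUnion_le s
    _ ≤ ∑ _i ∈ ht.toFinset, n := Finset.sum_le_sum (by simpa using h)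
    _ = n * t.ncard := by
        rw [Finset.sum_const, smul_eq_mul, ← ncard_eq_toFinset_card _ ht, mul_comm]

lemma mul_ncard_le_ncard_biUnion (ht : t.Finite) (hs : ∀ i ∈ t, (s i).Finite)
    (hd : t.PairwiseDisjoint s) {n : ℕ} (h : ∀ i ∈ t, n ≤ (s i).ncard) :
    n * t.ncard ≤ (⋃ i ∈ t, s i).ncard := by
  calc n * t.ncard = ∑ _i ∈ ht.toFinset, n := by
        rw [Finset.sum_const, smul_eq_mul, ← ncard_eq_toFinset_card _ ht, mul_comm]
    _ ≤ ∑ i ∈ ht.toFinset, (s i).ncard := Finset.sum_le_sum (by simpa using h)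
    _ = (⋃ i ∈ t, s i).ncard := by
        rw [ht.ncard_biUnion hs hd, finsum_mem_eq_finite_toFinset_sum _ ht]

lemma even_ncard_biUnion (ht : t.Finite) (hs : ∀ i ∈ t, (s i).Finite)
    (hd : t.PairwiseDisjoint s) (h : ∀ i ∈ t, Even (s i).ncard) :
    Even (⋃ i ∈ t, s i).ncard := by
  rw [ht.ncard_biUnion hs hd]
  exact finsum_mem_induction Even Even.zero (fun _ _ => Even.add) h

end Set.Finite

lemma Sym2.ncard_setOf_mem_le_two {α : Type*} (z : Sym2 α) : {a | a ∈ z}.ncard ≤ 2 := by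
  classical
  have : {a | a ∈ z} = ↑z.toFinset := by ext; simp
  rw [this, Set.ncard_coe_finset, Sym2.card_toFinset]
  split_ifs <;> omega

section Cactus

variable {V : Type*} {G : SimpleGraph V}

lemma SimpleGraph.Preconnected.mem_edgeSet_of_isBridge (hG : G.Preconnected) {e : Sym2 V}
    (he : G.IsBridge e) : e ∈ G.edgeSet := by
  cases e with | h u v => exact he.reachable_iff_adj.1 (hG u v)

lemma SimpleGraph.IsAcyclic.ncard_edgeSet_le [Finite V] (hG : G.IsAcyclic) :
    G.edgeSet.ncard ≤ Nat.card V - 1 := by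
  cases isEmpty_or_nonempty V
  · simp [Set.eq_empty_of_isEmpty G.edgeSet]
  obtain ⟨T, hGT, -, hT⟩ := connected_top.exists_isTree_le_of_le_of_isAcyclic le_top hG
  have hcard := (isTree_iff_connected_and_card.1 hT).2
  rw [Nat.card_coe_set_eq] at hcard
  have := Set.ncard_le_ncard (edgeSet_mono hGT)
  omega

lemma IsCactus.pairwise_disjoint_cycleEdgeSets (hG : IsCactus G) :
    (cycleEdgeSets G).Pairwise Disjoint := fun s hs t ht hne =>
  by_contra fun h => hne (hG.2 s hs t ht (Set.not_disjoint_iff_nonempty_inter.1 h))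

section cycleEdgeSets

variable {s : Set (Sym2 V)}

lemma subset_edgeSet_of_mem_cycleEdgeSets (hs : s ∈ cycleEdgeSets G) : s ⊆ G.edgeSet := by
  obtain ⟨u, p, -, rfl⟩ := hs
  exact fun e he => p.edges_subset_edgeSet he

lemma three_le_ncard_of_mem_cycleEdgeSets (hs : s ∈ cycleEdgeSets G) : 3 ≤ s.ncard := by
  classical
  obtain ⟨u, p, hp, rfl⟩ := hs
  have : {e | e ∈ p.edges} = ↑p.edges.toFinset := by ext; simp
  rw [this, Set.ncard_coe_finset, List.toFinset_card_of_nodup hp.edges_nodup, Walk.length_edges]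
  exact hp.three_le_length

lemma even_ncard_setOf_mk_mem_of_mem_cycleEdgeSets (hs : s ∈ cycleEdgeSets G) (v : V) :
    Even {u | s(v, u) ∈ s}.ncard := by
  obtain ⟨w, p, hp, rfl⟩ := hs
  have hN : {u | s(v, u) ∈ {e | e ∈ p.edges}} = p.toSubgraph.neighborSet v := by
    ext u
    simp [Walk.adj_toSubgraph_iff_mem_edges]
  rw [hN]
  by_cases hv : v ∈ p.support
  · rw [hp.ncard_neighborSet_toSubgraph_eq_two hv]
    exact even_two
  · have : p.toSubgraph.neighborSet v = ∅ := Set.eq_empty_of_forall_notMem fun u hu =>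
      hv (p.fst_mem_support_of_mem_edges (Walk.adj_toSubgraph_iff_mem_edges.1 hu))
    rw [this, Set.ncard_empty]
    exact Even.zero

end cycleEdgeSets

lemma ncard_edgeSet_le_add_numCycles [Finite V] :
    G.edgeSet.ncard ≤ Nat.card V - 1 + numCycles G := by
  choose f hf using fun s : cycleEdgeSets G =>
    Set.nonempty_of_ncard_ne_zero (Nat.ne_zero_of_lt (three_le_ncard_of_mem_cycleEdgeSets s.2))
  have hacyc : (G.deleteEdges (Set.range f)).IsAcyclic := by
    intro u p hp
    have hs : {e | e ∈ p.edges} ∈ cycleEdgeSets G :=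
      ⟨u, p.mapLe (G.deleteEdges_le _), hp.mapLe _, by rw [Walk.edges_mapLe_eq_edges]⟩
    have hfp := p.edges_subset_edgeSet (show f ⟨_, hs⟩ ∈ p.edges from hf ⟨_, hs⟩)
    rw [edgeSet_deleteEdges] at hfp
    exact hfp.2 ⟨_, rfl⟩
  have hrange : (Set.range f).ncard ≤ numCycles G := by
    simpa only [Nat.card_coe_set_eq, numCycles] using Finite.card_range_le f
  calc G.edgeSet.ncard ≤ (G.edgeSet \ Set.range f).ncard + (Set.range f).ncard :=
        Set.ncard_le_ncard_sdiff_add_ncard _ _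
    _ ≤ Nat.card V - 1 + numCycles G := by
        rw [← edgeSet_deleteEdges]
        exact add_le_add hacyc.ncard_edgeSet_le hrange

lemma bridgeCount_add_three_mul_numCycles_le [Finite V] (hconn : G.Preconnected)
    (hG : (cycleEdgeSets G).Pairwise Disjoint) :
    bridgeCount G + 3 * numCycles G ≤ G.edgeSet.ncard := by
  have hdisj : Disjoint {e | G.IsBridge e} (⋃ s ∈ cycleEdgeSets G, s) := by
    simp only [Set.disjoint_iUnion_right]
    rintro s ⟨u, p, hp, rfl⟩
    exact Set.disjoint_left.2 fun e he => he.notMem_edges_of_isCycle hp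
  have hsub : {e | G.IsBridge e} ∪ ⋃ s ∈ cycleEdgeSets G, s ⊆ G.edgeSet :=
    Set.union_subset (fun _ he => hconn.mem_edgeSet_of_isBridge he)
      (Set.iUnion₂_subset fun _ hs => subset_edgeSet_of_mem_cycleEdgeSets hs)
  have hcycles : 3 * numCycles G ≤ (⋃ s ∈ cycleEdgeSets G, s).ncard :=
    (Set.toFinite _).mul_ncard_le_ncard_biUnion (fun _ _ => Set.toFinite _) hG
      fun _ hs => three_le_ncard_of_mem_cycleEdgeSets hs
  calc bridgeCount G + 3 * numCycles G
      ≤ ({e | G.IsBridge e} ∪ ⋃ s ∈ cycleEdgeSets G, s).ncard := by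
        rw [Set.ncard_union_eq hdisj]
        exact Nat.add_le_add_left hcycles _
    _ ≤ G.edgeSet.ncard := Set.ncard_le_ncard hsub

lemma exists_isBridge_mem_of_odd_gdeg [Finite V] (hG : (cycleEdgeSets G).Pairwise Disjoint)
    {v : V} (hv : Odd (gdeg G v)) : ∃ e, G.IsBridge e ∧ v ∈ e := by
  by_contra! hno
  have hN : G.neighborSet v = ⋃ s ∈ cycleEdgeSets G, {u | s(v, u) ∈ s} := by
    ext u
    simp only [mem_neighborSet, Set.mem_iUnion, Set.mem_ofPred_eq, exists_prop]
    refine ⟨fun hadj => ?_, fun ⟨s, hs, hu⟩ => subset_edgeSet_of_mem_cycleEdgeSets hs hu⟩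
    have hnb : ¬ G.IsBridge s(v, u) := fun hb => hno _ hb (Sym2.mem_mk_left v u)
    rw [isBridge_iff_forall_cycle_notMem hadj] at hnb
    push Not at hnb
    obtain ⟨w, p, hp, hvu⟩ := hnb
    exact ⟨_, ⟨w, p, hp, rfl⟩, hvu⟩
  have hdisj : (cycleEdgeSets G).PairwiseDisjoint fun s => {u | s(v, u) ∈ s} :=
    fun s hs t ht hne =>
      Set.disjoint_left.2 fun _ hu hu' => Set.disjoint_left.1 (hG hs ht hne) hu hu'
  have heven : Even (gdeg G v) := by
    rw [gdeg, hN]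
    exact (Set.toFinite _).even_ncard_biUnion (fun _ _ => Set.toFinite _) hdisj
      fun _ hs => even_ncard_setOf_mk_mem_of_mem_cycleEdgeSets hs v
  exact Nat.not_even_iff_odd.2 hv heven

lemma eq_of_adj_of_gdeg_eq_one {u v w : V} (h : gdeg G u = 1) (hv : G.Adj u v) (hw : G.Adj u w) :
    v = w := by
  obtain ⟨a, ha⟩ := Set.ncard_eq_one.1 h
  have hv' : v ∈ G.neighborSet u := hv
  have hw' : w ∈ G.neighborSet u := hw
  rw [ha] at hv' hw'
  exact hv'.trans hw'.symm

lemma not_adj_of_gdeg_eq_one [Finite V] (hG : G.Connected) (hn : 2 < Nat.card V) {u v : V}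
    (hu : gdeg G u = 1) (hv : gdeg G v = 1) : ¬ G.Adj u v := by
  intro huv
  have hlt : ({u, v} : Set V).ncard < (Set.univ : Set V).ncard := by
    rw [Set.ncard_univ]
    refine (Set.ncard_insert_le u {v}).trans_lt ?_
    rw [Set.ncard_singleton]
    omega
  obtain ⟨w, -, hw⟩ := Set.exists_mem_notMem_of_ncard_lt_ncard hlt
  obtain ⟨p⟩ := hG.preconnected u w
  obtain ⟨d, -, hd, hd'⟩ := p.exists_boundary_dart _ (Set.mem_insert u {v}) hw
  rcases hd with hd | hd
  · exact hd' (Or.inr (eq_of_adj_of_gdeg_eq_one hu (hd ▸ d.adj) huv))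
  · exact hd' (Or.inl (eq_of_adj_of_gdeg_eq_one hv (hd ▸ d.adj) huv.symm))

lemma gmu1_le_bridgeCount [Finite V] (hG : IsCactus G) (hn : 2 < Nat.card V) :
    gmu1 G ≤ bridgeCount G := by
  choose g hgb hgv using fun v : {v | gdeg G v = 1} =>
    exists_isBridge_mem_of_odd_gdeg hG.pairwise_disjoint_cycleEdgeSets (v.2 ▸ odd_one)
  have hinj : Function.Injective g := by
    intro v₁ v₂ hg
    by_contra hne
    have hne' : (v₁ : V) ≠ v₂ := fun h => hne (Subtype.ext h)
    have hedge : g v₁ = s((v₁ : V), v₂) :=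
      (Sym2.mem_and_mem_iff hne').1 ⟨hgv v₁, hg ▸ hgv v₂⟩
    have hadj : G.Adj v₁ v₂ := by
      rw [← mem_edgeSet, ← hedge]
      exact hG.1.preconnected.mem_edgeSet_of_isBridge (hgb v₁)
    exact not_adj_of_gdeg_eq_one hG.1 hn v₁.2 v₂.2 hadj
  calc gmu1 G = Nat.card (Set.range g) := by
        rw [Nat.card_range_of_injective hinj, Nat.card_coe_set_eq, gmu1]
    _ ≤ bridgeCount G := by
        rw [Nat.card_coe_set_eq]
        exact Set.ncard_le_ncard (Set.range_subset_iff.2 hgb)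

lemma gmu1_add_gmuOdd [Finite V] : gmu1 G + gmuOdd G = {v | Odd (gdeg G v)}.ncard := by
  rw [gmu1, gmuOdd, ← Set.ncard_union_eq]
  · congr 1
    ext v
    simp only [Set.mem_union, Set.mem_ofPred_eq]
    constructor
    · rintro (h | h)
      · exact h ▸ odd_one
      · exact h.1
    · intro h
      rcases eq_or_ne (gdeg G v) 1 with h1 | h1
      · exact Or.inl h1
      · exact Or.inr ⟨h, lt_of_le_of_ne h.pos h1.symm⟩
  · exact Set.disjoint_left.2 fun v h₁ h₂ => h₂.2.ne' h₁

lemma ncard_setOf_odd_gdeg_le_two_mul_bridgeCount [Finite V]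
    (hG : (cycleEdgeSets G).Pairwise Disjoint) :
    {v | Odd (gdeg G v)}.ncard ≤ 2 * bridgeCount G := by
  calc {v | Odd (gdeg G v)}.ncard ≤ (⋃ e ∈ {e | G.IsBridge e}, {v | v ∈ e}).ncard :=
        Set.ncard_le_ncard fun v hv => by
          obtain ⟨e, he, hve⟩ := exists_isBridge_mem_of_odd_gdeg hG hv
          exact Set.mem_biUnion he hve
    _ ≤ 2 * bridgeCount G :=
        (Set.toFinite _).ncard_biUnion_le_mul fun e _ => e.ncard_setOf_mem_le_two

lemma graphBeta_le_bridgeCount [Finite V] (hG : IsCactus G) (hn : 2 < Nat.card V) :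
    graphBeta G ≤ bridgeCount G := by
  have hodd := ncard_setOf_odd_gdeg_le_two_mul_bridgeCount hG.pairwise_disjoint_cycleEdgeSets
  rw [← gmu1_add_gmuOdd] at hodd
  exact max_le (gmu1_le_bridgeCount hG hn) (by omega)

end Cactus

/-- A cactus graph (with `n > 2`) satisfies
`m ≤ ⌊(3(n-1) - β)/2⌋` where `β = max {μ₁, (μ₁ + μ_odd)/2}`. -/
theorem stmt6 {V : Type*} [Fintype V] (G : SimpleGraph V) (hG : IsCactus G)
    (hn : 2 < Fintype.card V) :
    G.edgeSet.ncard ≤ (3 * (Fintype.card V - 1) - graphBeta G) / 2 := by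
  rw [← Nat.card_eq_fintype_card] at hn ⊢
  have hm := ncard_edgeSet_le_add_numCycles (G := G)
  have hbc := bridgeCount_add_three_mul_numCycles_le hG.1.preconnected
    hG.pairwise_disjoint_cycleEdgeSets
  have hβ := graphBeta_le_bridgeCount hG hn
  omega
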